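/- arXiv:2503.11397 — 4 statements merged into one kernel-verified Lean document; each statement's English description precedes it below -/
import Mathlib

section
/- For every dimension d ≥ 1, every degree ℓ ∈ ℕ, and every θ ∈ (0,1], there exists a constant C > 0, depending only on d, ℓ and θ, such that for every d-variate real polynomial p of total degree at most ℓ, all points x, y ∈ ℝ^d and all radii R > 0 and ρ > 0 with θR ≤ ρ and closedBall(y,ρ) ⊆ closedBall(x,R), one has ∫_{B(x,R)} p(z)² dz ≤ C ∫_{B(y,ρ)} p(z)² dz. (Norm comparison for polynomials on nested balls: the polynomial extension estimate underlying the discrete inverse inequalities of the unfitted HHO analysis, where a polynomial defined on a well-cut sub-cell containing a ball of radius proportional to the cell size is extended to a neighborhood contained in a comparable ball.) -/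
/-!
After the affine substitution `z = x + R • w`, which does not raise the total degree, the outer
ball becomes the unit ball and the inner one a ball `B(w₀, r)` with `‖w₀‖ ≤ 1` and `θ ≤ r`.
On the finite-dimensional space of polynomials of degree `≤ ℓ`, `p ↦ ∫_B p²` is positive
definite for every ball `B` of positive radius (a polynomial vanishing on an open set is zero),
so compactness of the unit sphere compares these quadratic forms for any fixed pair of balls.
Covering the closed unit ball by finitely many balls of radius `θ / 2`, each contained in every
admissible inner ball whose centre is close to it, makes the constant uniform.
-/

open MeasureTheory Metric
open scoped Pointwise

theorem exists_pos_forall_le_mul_of_sq_homogeneous {E : Type*} [NormedAddCommGroup E]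
    [NormedSpace ℝ E] [ProperSpace E] {f g : E → ℝ} (hf : Continuous f) (hg : Continuous g)
    (hf_smul : ∀ (t : ℝ) v, f (t • v) = t ^ 2 * f v)
    (hg_smul : ∀ (t : ℝ) v, g (t • v) = t ^ 2 * g v)
    (hg_pos : ∀ v ≠ 0, 0 < g v) : ∃ C > 0, ∀ v, f v ≤ C * g v := by
  have hg_sphere : ∀ u ∈ sphere (0 : E) 1, 0 < g u := fun u hu =>
    hg_pos u (ne_zero_of_mem_sphere one_ne_zero ⟨u, hu⟩)
  obtain ⟨M, hM⟩ := (isCompact_sphere (0 : E) 1).exists_bound_of_continuousOn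
    (hf.continuousOn.div hg.continuousOn fun u hu => (hg_sphere u hu).ne')
  have h_sphere : ∀ u ∈ sphere (0 : E) 1, f u ≤ max M 1 * g u := fun u hu => by
    have : f u / g u ≤ M := (le_abs_self _).trans ((Real.norm_eq_abs _).symm.trans_le (hM u hu))
    rw [div_le_iff₀ (hg_sphere u hu)] at this
    exact this.trans (mul_le_mul_of_nonneg_right (le_max_left _ _) (hg_sphere u hu).le)
  refine ⟨max M 1, by positivity, fun v => ?_⟩
  rcases eq_or_ne v 0 with rfl | hv
  · have hf0 : f 0 = 0 := by simpa using hf_smul 0 0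
    have hg0 : g 0 = 0 := by simpa using hg_smul 0 0
    simp [hf0, hg0]
  have hu : ‖v‖⁻¹ • v ∈ sphere (0 : E) 1 := by simp [norm_smul, hv]
  have hv_eq : v = ‖v‖ • ‖v‖⁻¹ • v := by simp [smul_smul, hv]
  rw [hv_eq, hf_smul, hg_smul, mul_left_comm]
  exact mul_le_mul_of_nonneg_left (h_sphere _ hu) (sq_nonneg _)

theorem setIntegral_ball_eq_smul_setIntegral_ball {E F : Type*} [NormedAddCommGroup E]
    [NormedSpace ℝ E] [MeasurableSpace E] [BorelSpace E] [FiniteDimensional ℝ E]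
    (μ : Measure E) [μ.IsAddHaarMeasure] [NormedAddCommGroup F] [NormedSpace ℝ F]
    (f : E → F) (x b : E) {R : ℝ} (hR : 0 < R) (r : ℝ) :
    ∫ z in ball b r, f z ∂μ =
      R ^ Module.finrank ℝ E • ∫ w in ball (R⁻¹ • (b - x)) (r / R), f (x + R • w) ∂μ := by
  have h_dilate : R • ball (R⁻¹ • (b - x)) (r / R) = ball (b - x) r := by
    rw [_root_.smul_ball hR.ne', smul_inv_smul₀ hR.ne', Real.norm_of_nonneg hR.le,
      mul_div_cancel₀ _ hR.ne']
  have h_translate : (x + ·) ⁻¹' ball b r = ball (b - x) r := by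
    ext v; simp [dist_eq_norm, add_comm x]
  rw [Measure.setIntegral_comp_smul_of_pos μ (fun v => f (x + v)) _ hR, h_dilate, ← h_translate,
    (measurePreserving_add_left μ x).setIntegral_preimage_emb
      (measurableEmbedding_addLeft x), smul_inv_smul₀ (pow_ne_zero _ hR.ne')]

namespace MvPolynomial

theorem totalDegree_aeval_le_of_totalDegree_le_one {σ τ R : Type*} [CommSemiring R]
    (φ : σ → MvPolynomial τ R) (hφ : ∀ i, (φ i).totalDegree ≤ 1) (p : MvPolynomial σ R) :
    (aeval φ p).totalDegree ≤ p.totalDegree := by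
  classical
  conv_lhs => rw [p.as_sum, map_sum]
  refine (totalDegree_finsetSum _ _).trans (Finset.sup_le fun μ hμ => ?_)
  calc (aeval φ (monomial μ (p.coeff μ))).totalDegree
      ≤ ∑ i ∈ μ.support, μ i * (φ i).totalDegree := by
        rw [aeval_monomial, algebraMap_eq]
        refine (totalDegree_mul _ _).trans ?_
        rw [totalDegree_C, zero_add]
        exact (totalDegree_finsetProd _ _).trans
          (Finset.sum_le_sum fun i _ => totalDegree_pow _ _)
    _ ≤ ∑ i ∈ μ.support, μ i :=
        Finset.sum_le_sum fun i _ => by simpa using Nat.mul_le_mul_left (μ i) (hφ i)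
    _ ≤ p.totalDegree := le_totalDegree hμ

theorem totalDegree_aeval_C_add_C_mul_X_le {σ R : Type*} [CommSemiring R] (a : σ → R) (r : R)
    (p : MvPolynomial σ R) :
    (aeval (fun i => C (a i) + C r * X i) p).totalDegree ≤ p.totalDegree := by
  refine totalDegree_aeval_le_of_totalDegree_le_one _ (fun i => ?_) p
  refine (totalDegree_add _ _).trans (max_le ?_ ?_)
  · simp
  · refine (totalDegree_mul _ _).trans ?_
    rw [totalDegree_C, zero_add]
    exact (totalDegree_monomial_le (Finsupp.single i 1) (1 : R)).trans (by simp)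

theorem eval_aeval_C_add_C_mul_X {σ R : Type*} [CommSemiring R] (a : σ → R) (r : R)
    (p : MvPolynomial σ R) (v : σ → R) :
    eval v (aeval (fun i => C (a i) + C r * X i) p) = eval (fun i => a i + r * v i) p := by
  induction p using MvPolynomial.induction_on <;> simp_all

end MvPolynomial

section PolynomialSqIntegral

open MvPolynomial

variable {d : ℕ}

noncomputable def sqIntegral (s : Set (EuclideanSpace ℝ (Fin d))) (p : MvPolynomial (Fin d) ℝ) :
    ℝ :=
  ∫ z in s, (eval (fun i => z i) p) ^ 2

theorem continuous_eval_euclidean (p : MvPolynomial (Fin d) ℝ) :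
    Continuous fun z : EuclideanSpace ℝ (Fin d) => eval (fun i => z i) p :=
  (continuous_eval p).comp (PiLp.continuous_ofLp 2 _)

theorem exists_mem_ball_eval_ne_zero {p : MvPolynomial (Fin d) ℝ} (hp : p ≠ 0)
    (y : EuclideanSpace ℝ (Fin d)) {ρ : ℝ} (hρ : 0 < ρ) :
    ∃ z ∈ ball y ρ, eval (fun i => z i) p ≠ 0 := by
  by_contra! h
  have h_analytic :=
    AnalyticOnNhd.eval_linearMap (WithLp.linearEquiv 2 ℝ (Fin d → ℝ)).toLinearMap p
  have h_zero := h_analytic.eqOn_zero_of_preconnected_of_eventuallyEq_zero isPreconnected_univ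
    (Set.mem_univ y) (Filter.eventually_of_mem (ball_mem_nhds y hρ) h)
  exact hp (funext fun v => by simpa using h_zero (Set.mem_univ (WithLp.toLp 2 v)))

theorem integrableOn_sq_eval_ball (p : MvPolynomial (Fin d) ℝ) (y : EuclideanSpace ℝ (Fin d))
    (ρ : ℝ) : IntegrableOn (fun z : EuclideanSpace ℝ (Fin d) => (eval (fun i => z i) p) ^ 2)
      (ball y ρ) :=
  (((continuous_eval_euclidean p).pow 2).continuousOn.integrableOn_compact
    (isCompact_closedBall y ρ)).mono_set ball_subset_closedBall

theorem sqIntegral_nonneg (s : Set (EuclideanSpace ℝ (Fin d))) (p : MvPolynomial (Fin d) ℝ) :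
    0 ≤ sqIntegral s p :=
  setIntegral_nonneg_of_ae (ae_of_all _ fun _ => sq_nonneg _)

theorem sqIntegral_ball_pos {p : MvPolynomial (Fin d) ℝ} (hp : p ≠ 0)
    (y : EuclideanSpace ℝ (Fin d)) {ρ : ℝ} (hρ : 0 < ρ) : 0 < sqIntegral (ball y ρ) p := by
  obtain ⟨z, hz, hpz⟩ := exists_mem_ball_eval_ne_zero hp y hρ
  rw [sqIntegral, setIntegral_pos_iff_support_of_nonneg_ae (ae_of_all _ fun _ => sq_nonneg _)
    (integrableOn_sq_eval_ball p y ρ)]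
  exact ((((continuous_eval_euclidean p).pow 2).isOpen_support.inter isOpen_ball).measure_pos
    volume ⟨z, pow_ne_zero 2 hpz, hz⟩)

theorem sqIntegral_smul (s : Set (EuclideanSpace ℝ (Fin d))) (t : ℝ) (p : MvPolynomial (Fin d) ℝ) :
    sqIntegral s (t • p) = t ^ 2 * sqIntegral s p := by
  simp only [sqIntegral, smul_eval, mul_pow, integral_const_mul]

theorem sqIntegral_le_sqIntegral_ball {s : Set (EuclideanSpace ℝ (Fin d))}
    {y : EuclideanSpace ℝ (Fin d)} {ρ : ℝ} (hs : s ⊆ ball y ρ) (p : MvPolynomial (Fin d) ℝ) :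
    sqIntegral s p ≤ sqIntegral (ball y ρ) p :=
  setIntegral_mono_set (integrableOn_sq_eval_ball p y ρ) (ae_of_all _ fun _ => sq_nonneg _)
    hs.eventuallyLE

theorem continuous_sqIntegral_ball_comp {ι : Type*} [Fintype ι]
    (L : (ι → ℝ) →ₗ[ℝ] MvPolynomial (Fin d) ℝ) (x : EuclideanSpace ℝ (Fin d)) (r : ℝ) :
    Continuous fun c => sqIntegral (ball x r) (L c) := by
  classical
  have h_closure : (fun c => sqIntegral (ball x r) (L c)) =
      fun c => ∫ z in closure (ball x r), (eval (fun i => z i) (L c)) ^ 2 := by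
    ext c
    exact setIntegral_congr_set
      (closure_ae_eq_of_null_frontier ((convex_ball x r).addHaar_frontier volume)).symm
  rw [h_closure]
  refine continuous_parametric_integral_of_continuous ?_
    ((isCompact_closedBall x r).closure_of_subset ball_subset_closedBall)
  set e : ι → MvPolynomial (Fin d) ℝ := fun i => L fun j => if i = j then 1 else 0
  have h_expand : ∀ c (z : EuclideanSpace ℝ (Fin d)),
      eval (fun i => z i) (L c) = ∑ i, c i * eval (fun i => z i) (e i) := fun c z => by
    rw [L.pi_apply_eq_sum_univ c, map_sum]
    simp only [smul_eval, e]
  have h_cont : Continuous fun q : (ι → ℝ) × EuclideanSpace ℝ (Fin d) =>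
      (∑ i, q.1 i * eval (fun j => q.2 j) (e i)) ^ 2 :=
    (continuous_finsetSum _ fun i _ => ((continuous_apply i).comp continuous_fst).mul
      ((continuous_eval_euclidean (e i)).comp continuous_snd)).pow 2
  simpa only [Function.uncurry_def, h_expand] using h_cont

theorem exists_sqIntegral_ball_le_mul_of_finiteDimensional
    (V : Submodule ℝ (MvPolynomial (Fin d) ℝ)) [FiniteDimensional ℝ V]
    (x : EuclideanSpace ℝ (Fin d)) (R : ℝ) (y : EuclideanSpace ℝ (Fin d)) {ρ : ℝ} (hρ : 0 < ρ) :
    ∃ C > 0, ∀ p ∈ V, sqIntegral (ball x R) p ≤ C * sqIntegral (ball y ρ) p := by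
  let b := Module.finBasis ℝ V
  let L : (Fin (Module.finrank ℝ V) → ℝ) →ₗ[ℝ] MvPolynomial (Fin d) ℝ :=
    V.subtype ∘ₗ b.equivFun.symm.toLinearMap
  have hL : Function.Injective L := V.injective_subtype.comp b.equivFun.symm.injective
  obtain ⟨C, hC, h_le⟩ := exists_pos_forall_le_mul_of_sq_homogeneous
    (continuous_sqIntegral_ball_comp L x R) (continuous_sqIntegral_ball_comp L y ρ)
    (fun t c => by rw [map_smul, sqIntegral_smul]) (fun t c => by rw [map_smul, sqIntegral_smul])
    (fun c hc => sqIntegral_ball_pos ((map_ne_zero_iff L hL).2 hc) y hρ)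
  refine ⟨C, hC, fun p hp => ?_⟩
  simpa [L] using h_le (b.equivFun ⟨p, hp⟩)

theorem exists_sqIntegral_ball_le_mul_of_isCompact (V : Submodule ℝ (MvPolynomial (Fin d) ℝ))
    [FiniteDimensional ℝ V] (x : EuclideanSpace ℝ (Fin d)) (R : ℝ)
    {K : Set (EuclideanSpace ℝ (Fin d))} (hK : IsCompact K) {θ : ℝ} (hθ : 0 < θ) :
    ∃ C > 0, ∀ p ∈ V, ∀ y ∈ K, ∀ ρ, θ ≤ ρ →
      sqIntegral (ball x R) p ≤ C * sqIntegral (ball y ρ) p := by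
  obtain ⟨t, -, ht, hKt⟩ := finite_cover_balls_of_compact hK (half_pos hθ)
  choose C hC_pos hC using fun c => exists_sqIntegral_ball_le_mul_of_finiteDimensional V x R c
    (half_pos hθ)
  obtain ⟨M, hM⟩ := (ht.image C).bddAbove
  refine ⟨max M 1, by positivity, fun p hp y hy ρ hρ => ?_⟩
  obtain ⟨c, hct, hyc⟩ := Set.mem_iUnion₂.mp (hKt hy)
  have h_sub : ball c (θ / 2) ⊆ ball y ρ :=
    ball_subset_ball' (by rw [dist_comm]; linarith [mem_ball.mp hyc])
  calc sqIntegral (ball x R) p ≤ C c * sqIntegral (ball c (θ / 2)) p := hC c p hp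
    _ ≤ max M 1 * sqIntegral (ball y ρ) p :=
      mul_le_mul (le_max_of_le_left (hM ⟨c, hct, rfl⟩)) (sqIntegral_le_sqIntegral_ball h_sub p)
        (sqIntegral_nonneg _ p) (by positivity)

theorem sqIntegral_ball_eq_pow_mul (p : MvPolynomial (Fin d) ℝ) (x b : EuclideanSpace ℝ (Fin d))
    {R : ℝ} (hR : 0 < R) (r : ℝ) :
    sqIntegral (ball b r) p = R ^ d *
      sqIntegral (ball (R⁻¹ • (b - x)) (r / R)) (aeval (fun i => C (x i) + C R * X i) p) := by
  simp only [sqIntegral, eval_aeval_C_add_C_mul_X]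
  rw [setIntegral_ball_eq_smul_setIntegral_ball volume _ x b hR, finrank_euclideanSpace_fin,
    smul_eq_mul]
  simp

end PolynomialSqIntegral

theorem polynomial_norm_comparison_nested_balls_general
    (d ℓ : ℕ) (θ : ℝ) (hθ : θ ∈ Set.Ioc (0 : ℝ) 1) :
    ∃ C : ℝ, 0 < C ∧
      ∀ (p : MvPolynomial (Fin d) ℝ), p.totalDegree ≤ ℓ →
        ∀ (x y : EuclideanSpace ℝ (Fin d)) (R ρ : ℝ), 0 < R → 0 < ρ →
          θ * R ≤ ρ → closedBall y ρ ⊆ closedBall x R →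
          (∫ z in ball x R, (MvPolynomial.eval (fun i => z i) p) ^ 2) ≤
            C * ∫ z in ball y ρ, (MvPolynomial.eval (fun i => z i) p) ^ 2 := by
  obtain ⟨C, hC, h_unit⟩ := exists_sqIntegral_ball_le_mul_of_isCompact
    (MvPolynomial.restrictTotalDegree (Fin d) ℝ ℓ) 0 1 (isCompact_closedBall 0 1) hθ.1
  refine ⟨C, hC, fun p hp x y R ρ hR hρ hθρ hsub => ?_⟩
  set q := MvPolynomial.aeval
    (fun i => MvPolynomial.C (x i) + MvPolynomial.C R * MvPolynomial.X i) p
  have hq : q ∈ MvPolynomial.restrictTotalDegree (Fin d) ℝ ℓ :=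
    (MvPolynomial.mem_restrictTotalDegree _ _ _).2
      ((MvPolynomial.totalDegree_aeval_C_add_C_mul_X_le _ _ p).trans hp)
  have hy : R⁻¹ • (y - x) ∈ closedBall 0 1 := by
    simpa [dist_eq_norm, norm_smul, abs_of_pos hR, inv_mul_le_one₀ hR]
      using hsub (mem_closedBall_self hρ.le)
  have h_scaled := h_unit q hq _ hy (ρ / R) ((le_div_iff₀ hR).2 hθρ)
  change sqIntegral (ball x R) p ≤ C * sqIntegral (ball y ρ) p
  rw [sqIntegral_ball_eq_pow_mul p x x hR, sqIntegral_ball_eq_pow_mul p x y hR, sub_self,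
    smul_zero, div_self hR.ne', mul_left_comm]
  exact mul_le_mul_of_nonneg_left h_scaled (by positivity)

/-- Norm comparison for polynomials on nested balls. -/
theorem polynomial_norm_comparison_nested_balls
    (d ℓ : ℕ) (hd : 1 ≤ d) (θ : ℝ) (hθ : θ ∈ Set.Ioc (0 : ℝ) 1) :
    ∃ C : ℝ, 0 < C ∧
      ∀ (p : MvPolynomial (Fin d) ℝ), p.totalDegree ≤ ℓ →
        ∀ (x y : EuclideanSpace ℝ (Fin d)) (R ρ : ℝ), 0 < R → 0 < ρ →
          θ * R ≤ ρ → closedBall y ρ ⊆ closedBall x R →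
          (∫ z in ball x R, (MvPolynomial.eval (fun i => z i) p) ^ 2) ≤
            C * ∫ z in ball y ρ, (MvPolynomial.eval (fun i => z i) p) ^ 2 :=
  polynomial_norm_comparison_nested_balls_general d ℓ θ hθ
end

section
/- For every dimension d ≥ 1 and every degree ℓ ∈ ℕ, there exists a constant C > 0, depending only on d and ℓ, such that for every d-variate real polynomial p of total degree at most ℓ, every x ∈ ℝ^d and every r > 0, one has ∫_{S(x,r)} p(z)² dμ^{d−1}(z) ≤ C r⁻¹ ∫_{B(x,r)} p(z)² dz. (Discrete trace inequality for polynomials on spheres, the prototype of the discrete trace inequality h_S^{1/2}‖φ⁺‖_{∂S ∪ S^Γ} ≲ ‖φ‖ used in the unfitted HHO analysis.) -/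
/-!
Polynomials of degree at most `ℓ` form a finite-dimensional space on which both
`p ↦ sup_{B̄(0,1)} |p|` and `p ↦ ‖p‖_{L²(B(0,1))}` are norms (the second one because a polynomial
vanishing on an open set is zero), so by compactness of the unit sphere of the coefficient space
`p(y)² ≤ C ∫_{B(0,1)} p²` on `B̄(0,1)`. The affine substitution `y ↦ x + r y` preserves the degree and
turns this into `p(y)² ≤ C r⁻ᵈ ∫_{B(x,r)} p²` on `B̄(x,r)`. Integrating over `S(x,r)`, whose
`(d-1)`-dimensional Hausdorff measure is `r^(d-1)` times that of the unit sphere, gives the claim.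
The unit sphere has finite measure because it is covered by the radial projections of the
`2d` faces of the cube `[-1,1]^d`, which are Lipschitz images of `[-1,1]^(d-1)`.
-/

open MeasureTheory Metric MvPolynomial
open scoped ENNReal Pointwise

theorem exists_norm_sq_le_mul_of_homogeneous {E : Type*} [NormedAddCommGroup E]
    [NormedSpace ℝ E] [ProperSpace E] {q : E → ℝ} (hq : Continuous q)
    (hpos : ∀ c ≠ 0, 0 < q c) (hsmul : ∀ (t : ℝ) (c : E), q (t • c) = t ^ 2 * q c) :
    ∃ C, 0 ≤ C ∧ ∀ c, ‖c‖ ^ 2 ≤ C * q c := by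
  cases subsingleton_or_nontrivial E
  · exact ⟨0, le_rfl, fun c => by simp [Subsingleton.elim c 0]⟩
  obtain ⟨c₀, hc₀, hmin⟩ := (isCompact_sphere (0 : E) 1).exists_isMinOn
    (NormedSpace.sphere_nonempty.2 zero_le_one) hq.continuousOn
  have hm : 0 < q c₀ := hpos c₀ (ne_zero_of_mem_unit_sphere ⟨c₀, hc₀⟩)
  refine ⟨(q c₀)⁻¹, inv_nonneg.2 hm.le, fun c => ?_⟩
  rcases eq_or_ne c 0 with rfl | hc
  · simp [(by simpa using hsmul 0 0 : q 0 = 0)]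
  have hunit : ‖c‖⁻¹ • c ∈ sphere (0 : E) 1 := by simp [norm_smul, hc]
  have h : q c₀ ≤ q (‖c‖⁻¹ • c) := hmin hunit
  rw [hsmul, inv_pow] at h
  rw [le_inv_mul_iff₀ hm]
  have : 0 < ‖c‖ ^ 2 := by positivity
  calc q c₀ * ‖c‖ ^ 2 ≤ ((‖c‖ ^ 2)⁻¹ * q c) * ‖c‖ ^ 2 := by gcongr
    _ = q c := by field_simp

section FiniteFamily

variable {ι X : Type*} [Fintype ι] {φ : ι → X → ℝ}

lemma sq_sum_mul (c : ι → ℝ) (x : X) :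
    (∑ i, c i * φ i x) ^ 2 = ∑ i, ∑ j, c i * c j * (φ i x * φ j x) := by
  rw [sq, Finset.sum_mul_sum]
  exact Finset.sum_congr rfl fun i _ => Finset.sum_congr rfl fun j _ => by ring

variable [MeasurableSpace X] {μ : Measure X}
  (hφ : ∀ i j, Integrable (fun x => φ i x * φ j x) μ)
include hφ

lemma integrable_sq_sum_mul (c : ι → ℝ) : Integrable (fun x => (∑ i, c i * φ i x) ^ 2) μ := by
  simp_rw [sq_sum_mul]
  exact integrable_finsetSum _ fun i _ => integrable_finsetSum _ fun j _ => (hφ i j).const_mul _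

lemma integral_sq_sum_mul (c : ι → ℝ) :
    ∫ x, (∑ i, c i * φ i x) ^ 2 ∂μ = ∑ i, ∑ j, c i * c j * ∫ x, φ i x * φ j x ∂μ := by
  simp_rw [sq_sum_mul]
  rw [integral_finsetSum _ fun i _ => integrable_finsetSum _ fun j _ => (hφ i j).const_mul _]
  refine Finset.sum_congr rfl fun i _ => ?_
  rw [integral_finsetSum _ fun j _ => (hφ i j).const_mul _]
  simp_rw [integral_const_mul]

theorem exists_sq_sum_mul_le_mul_integral_sq [TopologicalSpace X] {K : Set X}
    (hK : IsCompact K) (hφK : ∀ i, ContinuousOn (φ i) K)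
    (hind : ∀ c : ι → ℝ, (∀ᵐ x ∂μ, ∑ i, c i * φ i x = 0) → c = 0) :
    ∃ C, 0 ≤ C ∧ ∀ (c : ι → ℝ), ∀ y ∈ K,
      (∑ i, c i * φ i y) ^ 2 ≤ C * ∫ x, (∑ i, c i * φ i x) ^ 2 ∂μ := by
  set q : (ι → ℝ) → ℝ := fun c => ∫ x, (∑ i, c i * φ i x) ^ 2 ∂μ
  have hq : Continuous q := by
    simp only [q, integral_sq_sum_mul hφ]
    fun_prop
  have hpos : ∀ c ≠ 0, 0 < q c := by
    intro c hc
    refine (integral_nonneg fun x => sq_nonneg _).lt_of_ne fun h => hc (hind c ?_)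
    filter_upwards [(integral_eq_zero_iff_of_nonneg (fun x => sq_nonneg _)
      (integrable_sq_sum_mul hφ c)).1 h.symm] with x hx
    exact pow_eq_zero_iff two_ne_zero |>.1 hx
  have hsmul : ∀ (t : ℝ) c, q (t • c) = t ^ 2 * q c := by
    intro t c
    simp only [q, Pi.smul_apply, smul_eq_mul, mul_assoc, ← Finset.mul_sum, mul_pow,
      integral_const_mul]
  obtain ⟨C, hC, hnorm⟩ := exists_norm_sq_le_mul_of_homogeneous hq hpos hsmul
  obtain ⟨B, hB⟩ := hK.exists_bound_of_continuousOn (f := fun y => ∑ i, |φ i y|) (by fun_prop)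
  refine ⟨B ^ 2 * C, by positivity, fun c y hy => ?_⟩
  have hsum : |∑ i, c i * φ i y| ≤ ‖c‖ * B := by
    calc |∑ i, c i * φ i y| ≤ ∑ i, ‖c‖ * |φ i y| := by
          refine (Finset.abs_sum_le_sum_abs _ _).trans (Finset.sum_le_sum fun i _ => ?_)
          rw [abs_mul]
          exact mul_le_mul_of_nonneg_right (norm_le_pi_norm c i) (abs_nonneg _)
      _ ≤ ‖c‖ * B := by
          rw [← Finset.mul_sum]
          exact mul_le_mul_of_nonneg_left ((le_abs_self _).trans (hB y hy)) (norm_nonneg _)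
  calc (∑ i, c i * φ i y) ^ 2 ≤ (‖c‖ * B) ^ 2 := sq_le_sq' (abs_le.1 hsum).1 (abs_le.1 hsum).2
    _ = B ^ 2 * ‖c‖ ^ 2 := by ring
    _ ≤ B ^ 2 * (C * q c) := by gcongr; exact hnorm c
    _ = B ^ 2 * C * q c := by ring

end FiniteFamily

section Scaling

variable {E : Type*} [NormedAddCommGroup E] [NormedSpace ℝ E] [MeasurableSpace E] [BorelSpace E]

theorem hausdorffMeasure_sphere {d : ℝ} (hd : 0 ≤ d) (x : E) {r : ℝ} (hr : 0 < r) :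
    μH[d] (sphere x r) = ENNReal.ofReal r ^ d * μH[d] (sphere (0 : E) 1) := by
  have : sphere x r = x +ᵥ r • sphere (0 : E) 1 := by
    rw [smul_sphere' hr.ne', vadd_sphere, smul_zero, vadd_eq_add, add_zero,
      Real.norm_of_nonneg hr.le, mul_one]
  rw [this, hausdorffMeasure_vadd _ (Or.inl hd), Measure.hausdorffMeasure_smul₀ hd hr.ne',
    ENNReal.smul_def, smul_eq_mul, ENNReal.coe_rpow_of_nonneg _ hd, ← enorm_eq_nnnorm,
    Real.enorm_of_nonneg hr.le]

theorem measureReal_hausdorffMeasure_sphere {d : ℝ} (hd : 0 ≤ d) (x : E) {r : ℝ} (hr : 0 < r) :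
    (μH[d]).real (sphere x r) = r ^ d * (μH[d]).real (sphere (0 : E) 1) := by
  rw [measureReal_def, hausdorffMeasure_sphere hd x hr, ENNReal.toReal_mul, ← ENNReal.toReal_rpow,
    ENNReal.toReal_ofReal hr.le, measureReal_def]

theorem setIntegral_ball_eq_mul [FiniteDimensional ℝ E] (μ : Measure E) [μ.IsAddHaarMeasure]
    (f : E → ℝ) (x : E) {r : ℝ} (hr : 0 < r) :
    ∫ z in ball x r, f z ∂μ = r ^ Module.finrank ℝ E * ∫ y in ball 0 1, f (x + r • y) ∂μ := by
  rw [Measure.setIntegral_comp_smul_of_pos μ (fun z => f (x + z)) _ hr, smul_unitBall_of_pos hr,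
    ← (measurePreserving_add_left μ x).setIntegral_preimage_emb (measurableEmbedding_addLeft x),
    smul_eq_mul, ← mul_assoc, mul_inv_cancel₀ (by positivity), one_mul]
  congr 1
  ext z
  simp

end Scaling

namespace MvPolynomial

variable {σ : Type*}

theorem eq_zero_of_eval_eq_zero_on_isOpen {𝕜 : Type*} [RCLike 𝕜] [Fintype σ]
    {p : MvPolynomial σ 𝕜} {V : Set (σ → 𝕜)} (hV : IsOpen V) (hV₀ : V.Nonempty)
    (h : ∀ x ∈ V, eval x p = 0) : p = 0 := by
  obtain ⟨x₀, hx₀⟩ := hV₀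
  have := (AnalyticOnNhd.eval_mvPolynomial p).eqOn_zero_of_preconnected_of_eventuallyEq_zero
    isPreconnected_univ (Set.mem_univ x₀) (Filter.eventually_of_mem (hV.mem_nhds hx₀) h)
  exact funext fun x => by simpa using this (Set.mem_univ x)

theorem totalDegree_bind₁_le {τ R : Type*} [CommSemiring R] {g : σ → MvPolynomial τ R} {k : ℕ}
    (hg : ∀ i, (g i).totalDegree ≤ k) (p : MvPolynomial σ R) :
    (bind₁ g p).totalDegree ≤ p.totalDegree * k := by
  rw [bind₁, aeval_def, eval₂_eq]
  refine totalDegree_finsetSum_le fun m hm => (totalDegree_mul _ _).trans ?_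
  rw [algebraMap_eq, totalDegree_C, zero_add]
  calc (∏ i ∈ m.support, g i ^ m i).totalDegree ≤ ∑ i ∈ m.support, m i * k :=
        (totalDegree_finsetProd _ _).trans <| Finset.sum_le_sum fun i _ =>
          (totalDegree_pow _ _).trans (Nat.mul_le_mul_left _ (hg i))
    _ = (m.sum fun _ e => e) * k := by rw [Finsupp.sum, Finset.sum_mul]
    _ ≤ p.totalDegree * k := Nat.mul_le_mul_right _ (le_totalDegree hm)

theorem totalDegree_bind₁_affine_le {R : Type*} [CommRing R] (a b : σ → R)
    (p : MvPolynomial σ R) :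
    (bind₁ (fun i => C (a i) + C (b i) * X i) p).totalDegree ≤ p.totalDegree := by
  refine (totalDegree_bind₁_le (fun i => ?_) p).trans_eq (mul_one _)
  rw [C_mul_X_eq_monomial]
  refine (totalDegree_add _ _).trans (max_le (by rw [totalDegree_C]; omega) ?_)
  exact (totalDegree_monomial_le _ _).trans (by simp)

theorem eval_bind₁_affine {R : Type*} [CommRing R] (a b : σ → R) (p : MvPolynomial σ R)
    (y : σ → R) :
    eval y (bind₁ (fun i => C (a i) + C (b i) * X i) p) = eval (fun i => a i + b i * y i) p := by
  change eval₂Hom (RingHom.id R) y _ = _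
  rw [eval₂Hom_bind₁]
  change eval (fun i => eval y (C (a i) + C (b i) * X i)) p = _
  simp only [map_add, map_mul, eval_C, eval_X]

theorem exists_sq_eval_le_mul_integral_sq [Fintype σ] (S : Finset (σ →₀ ℕ))
    {K U : Set (EuclideanSpace ℝ σ)} (hK : IsCompact K) (hU : IsOpen U)
    (hUb : Bornology.IsBounded U) (hU₀ : U.Nonempty) :
    ∃ C, 0 ≤ C ∧ ∀ p : MvPolynomial σ ℝ, ↑p.support ⊆ (S : Set (σ →₀ ℕ)) → ∀ y ∈ K,
      eval (fun i => y i) p ^ 2 ≤ C * ∫ z in U, eval (fun i => z i) p ^ 2 := by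
  set φ : S → EuclideanSpace ℝ σ → ℝ := fun m z => eval (fun i => z i) (monomial ↑m 1)
  have hcont (p : MvPolynomial σ ℝ) :
      Continuous fun z : EuclideanSpace ℝ σ => eval (fun i => z i) p :=
    (continuous_eval p).comp (PiLp.continuous_ofLp 2 _)
  have hsum (c : S → ℝ) (z : EuclideanSpace ℝ σ) :
      ∑ m, c m * φ m z = eval (fun i => z i) (∑ m : S, monomial ↑m (c m)) := by
    simp [φ, eval_monomial]
  have hcoeff (p : MvPolynomial σ ℝ) (hp : ↑p.support ⊆ (S : Set (σ →₀ ℕ))) :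
      ∑ m : S, monomial ↑m (coeff m p) = p := by
    rw [Finset.sum_coe_sort S fun m => monomial m (coeff m p), ← Finset.sum_subset hp
      fun m _ hm => by rw [notMem_support_iff.1 hm, monomial_zero], ← as_sum]
  have hint (m m' : S) : Integrable (fun z => φ m z * φ m' z) (volume.restrict U) :=
    (((hcont _).mul (hcont _)).continuousOn.integrableOn_compact
      hUb.isCompact_closure).mono_set subset_closure
  have hind (c : S → ℝ) (hc : ∀ᵐ z ∂volume.restrict U, ∑ m, c m * φ m z = 0) : c = 0 := by
    classical
    simp only [hsum] at hc
    have hPU := Measure.eqOn_open_of_ae_eq hc hU (hcont _).continuousOn continuousOn_const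
    have hP := eq_zero_of_eval_eq_zero_on_isOpen (hU.preimage (PiLp.continuous_toLp 2 _))
      (hU₀.preimage (WithLp.toLp_surjective 2)) fun x hx => hPU hx
    funext m
    simpa [coeff_sum, coeff_monomial, Subtype.coe_inj] using congrArg (coeff m) hP
  obtain ⟨C, hC, h⟩ :=
    exists_sq_sum_mul_le_mul_integral_sq hint hK (fun m => (hcont _).continuousOn) hind
  refine ⟨C, hC, fun p hp y hy => ?_⟩
  simpa only [hsum, hcoeff p hp] using h (fun m => coeff m p) y hy

theorem exists_sq_eval_le_mul_integral_ball [Fintype σ] (ℓ : ℕ) :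
    ∃ C, 0 ≤ C ∧ ∀ p : MvPolynomial σ ℝ, p.totalDegree ≤ ℓ →
      ∀ (x : EuclideanSpace ℝ σ) {r : ℝ}, 0 < r → ∀ y ∈ closedBall x r,
        eval (fun i => y i) p ^ 2 ≤
          C / r ^ Fintype.card σ * ∫ z in ball x r, eval (fun i => z i) p ^ 2 := by
  have hS := Finsupp.finite_of_degree_le (σ := σ) ℓ
  obtain ⟨K, hK, hunit⟩ := exists_sq_eval_le_mul_integral_sq hS.toFinset
    (isCompact_closedBall (0 : EuclideanSpace ℝ σ) 1) (isOpen_ball (x := 0)) isBounded_ball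
    (nonempty_ball.2 one_pos)
  refine ⟨K, hK, fun p hp x r hr y hy => ?_⟩
  set q := bind₁ (fun i => C (x i) + C r * X i) p
  have hq (w : EuclideanSpace ℝ σ) : eval (fun i => w i) q = eval (fun i => (x + r • w) i) p :=
    eval_bind₁_affine (fun i => x i) (fun _ => r) p _
  have hqS : ↑q.support ⊆ (hS.toFinset : Set (σ →₀ ℕ)) := fun m hm => by
    rw [hS.coe_toFinset]
    exact (le_totalDegree hm).trans ((totalDegree_bind₁_affine_le _ _ p).trans hp)
  have hy' : r⁻¹ • (y - x) ∈ closedBall (0 : EuclideanSpace ℝ σ) 1 := by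
    rw [mem_closedBall_zero_iff, norm_smul, ← dist_eq_norm, Real.norm_of_nonneg (by positivity),
      inv_mul_le_one₀ hr]
    exact hy
  have hball : ∫ z in ball x r, eval (fun i => z i) p ^ 2 =
      r ^ Fintype.card σ * ∫ w in ball (0 : EuclideanSpace ℝ σ) 1, eval (fun i => w i) q ^ 2 := by
    simp only [setIntegral_ball_eq_mul _ _ x hr, finrank_euclideanSpace, hq]
  have h := hunit q hqS _ hy'
  rw [hq, smul_smul, mul_inv_cancel₀ hr.ne', one_smul, add_sub_cancel] at h
  rw [hball]
  field_simp
  exact h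

end MvPolynomial

section UnitSphere

variable {n : ℕ}

/-- The radial projection onto the unit sphere of the face `{u_i = ε}` of the cube `[-1,1]^(n+1)`,
parametrised by the remaining coordinates. -/
noncomputable def cubeFaceToSphere (i : Fin (n + 1)) (ε : ℝ) (u : Fin n → ℝ) :
    EuclideanSpace ℝ (Fin (n + 1)) :=
  ‖WithLp.toLp 2 (Fin.insertNth (α := fun _ => ℝ) i ε u)‖⁻¹ •
    WithLp.toLp 2 (Fin.insertNth (α := fun _ => ℝ) i ε u)

lemma contDiff_cubeFaceToSphere (i : Fin (n + 1)) {ε : ℝ} (hε : ε ≠ 0) :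
    ContDiff ℝ 1 (cubeFaceToSphere i ε) := by
  have hins : ContDiff ℝ 1 fun u : Fin n → ℝ =>
      WithLp.toLp 2 (Fin.insertNth (α := fun _ => ℝ) i ε u) := by
    refine (contDiff_piLp 2).2 fun j => ?_
    obtain rfl | ⟨k, rfl⟩ := i.eq_self_or_eq_succAbove j
    · simpa using contDiff_const
    · simpa using contDiff_apply ℝ ℝ k
  have hne (u : Fin n → ℝ) : WithLp.toLp 2 (Fin.insertNth (α := fun _ => ℝ) i ε u) ≠ 0 := by
    intro h
    simpa [hε] using congrArg (fun w : EuclideanSpace ℝ (Fin (n + 1)) => w i) h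
  exact ((hins.norm ℝ hne).inv fun u => norm_ne_zero_iff.2 (hne u)).smul hins

lemma sphere_subset_iUnion_cubeFaceToSphere :
    sphere (0 : EuclideanSpace ℝ (Fin (n + 1))) 1 ⊆
      ⋃ i : Fin (n + 1), ⋃ ε ∈ ({-1, 1} : Set ℝ), cubeFaceToSphere i ε '' closedBall 0 1 := by
  intro y hy
  obtain ⟨i, -, hi⟩ :=
    Finset.exists_max_image Finset.univ (fun j => |y j|) ⟨0, Finset.mem_univ _⟩
  have hyi : 0 < |y i| := by
    by_contra! h
    have : y = 0 := by
      ext j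
      simpa using le_antisymm ((hi j (Finset.mem_univ j)).trans h) (abs_nonneg _)
    simp [this] at hy
  have hε : y i / |y i| ∈ ({-1, 1} : Set ℝ) := by
    rcases abs_choice (y i) with h | h <;> simp [h, abs_pos.1 hyi]
  simp only [Set.mem_iUnion]
  refine ⟨i, _, hε, fun k => y (i.succAbove k) / |y i|, ?_, ?_⟩
  · rw [mem_closedBall, dist_zero_right, pi_norm_le_iff_of_nonneg zero_le_one]
    intro k
    rw [Real.norm_eq_abs, abs_div, abs_abs, div_le_one hyi]
    exact hi _ (Finset.mem_univ _)
  · have : WithLp.toLp 2 (Fin.insertNth (α := fun _ => ℝ) i (y i / |y i|)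
        fun k => y (i.succAbove k) / |y i|) = |y i|⁻¹ • y := by
      ext j
      obtain rfl | ⟨k, rfl⟩ := i.eq_self_or_eq_succAbove j <;> simp [div_eq_inv_mul]
    rw [cubeFaceToSphere, this, norm_smul, mem_sphere_zero_iff_norm.1 hy]
    simp [smul_smul, hyi.ne']

lemma hausdorffMeasure_unitSphere_lt_top :
    μH[n] (sphere (0 : EuclideanSpace ℝ (Fin (n + 1))) 1) < ∞ := by
  have hcube : (μH[n] : Measure (Fin n → ℝ)) (closedBall 0 1) < ∞ := by
    have h := hausdorffMeasure_pi_real (ι := Fin n)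
    rw [Fintype.card_fin] at h
    exact h ▸ measure_closedBall_lt_top
  refine (measure_mono sphere_subset_iUnion_cubeFaceToSphere).trans_lt
    ((measure_iUnion_fintype_le _ _).trans_lt (ENNReal.sum_lt_top.2 fun i _ => ?_))
  refine measure_biUnion_lt_top (by simp) fun ε hε => ?_
  have hε0 : ε ≠ 0 := by rcases hε with rfl | rfl <;> norm_num
  obtain ⟨L, hL⟩ := (contDiff_cubeFaceToSphere i hε0).locallyLipschitz.locallyLipschitzOn
    |>.exists_lipschitzOnWith_of_compact (isCompact_closedBall 0 1)
  exact (hL.hausdorffMeasure_image_le n.cast_nonneg).trans_lt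
    (ENNReal.mul_lt_top (by simp) hcube)

lemma hausdorffMeasure_sphere_lt_top (x : EuclideanSpace ℝ (Fin (n + 1))) {r : ℝ} (hr : 0 < r) :
    μH[n] (sphere x r) < ∞ := by
  rw [hausdorffMeasure_sphere n.cast_nonneg x hr]
  exact ENNReal.mul_lt_top (by simp) hausdorffMeasure_unitSphere_lt_top

end UnitSphere

/-- Discrete trace inequality for polynomials on spheres. -/
theorem polynomial_trace_inequality_sphere
    (d ℓ : ℕ) (hd : 1 ≤ d) :
    ∃ C : ℝ, 0 < C ∧
      ∀ (p : MvPolynomial (Fin d) ℝ), p.totalDegree ≤ ℓ →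
        ∀ (x : EuclideanSpace ℝ (Fin d)) (r : ℝ), 0 < r →
          (∫ z in sphere x r, (MvPolynomial.eval (fun i => z i) p) ^ 2
              ∂(MeasureTheory.Measure.hausdorffMeasure ((d : ℝ) - 1))) ≤
            C * r⁻¹ * ∫ z in ball x r, (MvPolynomial.eval (fun i => z i) p) ^ 2 := by
  obtain ⟨n, rfl⟩ : ∃ n, d = n + 1 := ⟨d - 1, by omega⟩
  obtain ⟨K, hK, hbound⟩ := exists_sq_eval_le_mul_integral_ball (σ := Fin (n + 1)) ℓ
  set A := (μH[(n : ℝ)]).real (sphere (0 : EuclideanSpace ℝ (Fin (n + 1))) 1)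
  refine ⟨K * A + 1, by positivity, fun p hp x r hr => ?_⟩
  rw [show ((n + 1 : ℕ) : ℝ) - 1 = n by push_cast; ring]
  calc _ ≤ K / r ^ (n + 1) * (∫ z in ball x r, eval (fun i => z i) p ^ 2) *
        (μH[(n : ℝ)]).real (sphere x r) :=
        (Real.le_norm_self _).trans <| norm_setIntegral_le_of_norm_le_const
          (hausdorffMeasure_sphere_lt_top x hr) fun z hz => by
            simpa using hbound p hp x hr z (sphere_subset_closedBall hz)
    _ = K * A * r⁻¹ * ∫ z in ball x r, eval (fun i => z i) p ^ 2 := by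
        rw [measureReal_hausdorffMeasure_sphere n.cast_nonneg x hr, Real.rpow_natCast]
        field_simp
        ring
    _ ≤ _ := by gcongr; linarith
end

section
/- For every dimension d ≥ 1 and every degree ℓ ∈ ℕ, there exists a constant C > 0, depending only on d and ℓ, such that for every d-variate real polynomial p of total degree at most ℓ, every x ∈ ℝ^d, every r > 0, every unit vector n ∈ ℝ^d and every c ∈ ℝ, letting F := {z ∈ closedBall(x,r) : ⟪z,n⟫ = c} be the intersection of the closed ball with an affine hyperplane, one has ∫_F p(z)² dμ^{d−1}(z) ≤ C r⁻¹ ∫_{B(x,r)} p(z)² dz. (Discrete trace inequality for polynomials on flat faces cutting through a ball, the prototype of the trace bound on the flat sub-faces ∂S^i of mesh cells in the unfitted HHO analysis.) -/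
/-!
Polynomials of degree at most `ℓ` form a finite-dimensional space on which the `L²` norm over the
open unit ball is a genuine norm (a polynomial vanishing on an open set is zero), so it dominates
the sup norm over the closed unit ball. An affine change of variables, which preserves the degree,
turns this into `p(z)² ≤ K r⁻ᵈ ∫_{B(x,r)} p²` for `z ∈ closedBall x r`. A hyperplane section of
`closedBall x r` is isometric to a subset of a `(d-1)`-dimensional Euclidean ball of radius `2r`,
so its `μ^{d-1}`-measure is `O(r^{d-1})`; integrating the pointwise bound over it leaves `r⁻¹`.
-/

open MeasureTheory Metric MvPolynomial Module
open scoped ENNReal RealInnerProductSpace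

theorem LinearMap.exists_norm_le_mul_norm_of_injective {𝕜 V F G : Type*} [NontriviallyNormedField 𝕜]
    [CompleteSpace 𝕜] [AddCommGroup V] [Module 𝕜 V] [FiniteDimensional 𝕜 V]
    [NormedAddCommGroup F] [NormedSpace 𝕜 F] [NormedAddCommGroup G] [NormedSpace 𝕜 G]
    (T : V →ₗ[𝕜] F) (hT : Function.Injective T) (S : V →ₗ[𝕜] G) :
    ∃ C, 0 < C ∧ ∀ v, ‖S v‖ ≤ C * ‖T v‖ := by
  let e := LinearEquiv.ofInjective T hT
  let S' : T.range →L[𝕜] G := LinearMap.toContinuousLinearMap (S ∘ₗ e.symm.toLinearMap)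
  refine ⟨‖S'‖ + 1, by positivity, fun v => ?_⟩
  calc ‖S v‖ = ‖S' (e v)‖ := by simp [S']
    _ ≤ ‖S'‖ * ‖T v‖ := S'.le_opNorm (e v)
    _ ≤ (‖S'‖ + 1) * ‖T v‖ := by gcongr; linarith

theorem MeasureTheory.Measure.setIntegral_ball_comp_add_smul {E F : Type*} [NormedAddCommGroup E]
    [NormedSpace ℝ E] [MeasurableSpace E] [BorelSpace E] [FiniteDimensional ℝ E] (μ : Measure E)
    [μ.IsAddHaarMeasure] [NormedAddCommGroup F] [NormedSpace ℝ F] (f : E → F) (x : E) {r : ℝ}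
    (hr : 0 < r) :
    ∫ w in ball 0 1, f (x + r • w) ∂μ = (r ^ finrank ℝ E)⁻¹ • ∫ y in ball x r, f y ∂μ := by
  have hball : ball (0 : E) r = (x + ·) ⁻¹' ball x r := by
    rw [preimage_add_left_ball, neg_add_cancel]
  rw [μ.setIntegral_comp_smul (fun y => f (x + y)) _ hr.ne', smul_unitBall_of_pos hr,
    abs_of_pos (by positivity), hball, (measurePreserving_add_left μ x).setIntegral_preimage_emb
      (measurableEmbedding_addLeft x)]

theorem MvPolynomial.eq_zero_of_eval_eq_zero_on_isOpen_s3 {𝕜 σ : Type*} [RCLike 𝕜]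
    [Fintype σ] {p : MvPolynomial σ 𝕜} {U : Set (σ → 𝕜)} (hU : IsOpen U)
    (hne : U.Nonempty) (h : ∀ x ∈ U, eval x p = 0) : p = 0 := by
  obtain ⟨x₀, hx₀⟩ := hne
  have hzero := (AnalyticOnNhd.eval_mvPolynomial p).eqOn_zero_of_preconnected_of_eventuallyEq_zero
    isPreconnected_univ (Set.mem_univ x₀) (Filter.eventually_of_mem (hU.mem_nhds hx₀) h)
  exact MvPolynomial.funext fun x => by simpa using hzero (Set.mem_univ x)

theorem MvPolynomial.totalDegree_bind₁_le_s3 {σ τ R : Type*} [CommSemiring R]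
    (f : σ → MvPolynomial τ R) (p : MvPolynomial σ R) {M : ℕ} (hf : ∀ i, (f i).totalDegree ≤ M) :
    (bind₁ f p).totalDegree ≤ p.totalDegree * M := by
  conv_lhs => rw [p.as_sum, map_sum]
  refine (totalDegree_finsetSum _ _).trans (Finset.sup_le fun m hm => ?_)
  rw [bind₁_monomial]
  calc (C (coeff m p) * ∏ i ∈ m.support, f i ^ m i).totalDegree
      ≤ ∑ i ∈ m.support, (f i ^ m i).totalDegree :=
        (totalDegree_mul _ _).trans (by simpa using totalDegree_finsetProd _ _)
    _ ≤ ∑ i ∈ m.support, m i * M :=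
        Finset.sum_le_sum fun i _ => (totalDegree_pow _ _).trans (Nat.mul_le_mul_left _ (hf i))
    _ = (m.sum fun _ e => e) * M := by rw [Finsupp.sum, Finset.sum_mul]
    _ ≤ p.totalDegree * M := Nat.mul_le_mul_right _ (le_totalDegree hm)

theorem MvPolynomial.continuous_eval_euclideanSpace {ι : Type*} (p : MvPolynomial ι ℝ) :
    Continuous fun z : EuclideanSpace ℝ ι => eval (fun i => z i) p :=
  (continuous_eval p).comp (PiLp.continuous_ofLp 2 _)

theorem MvPolynomial.exists_totalDegree_le_eval_eq_eval_add_smul {ι : Type*} (p : MvPolynomial ι ℝ)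
    (x : EuclideanSpace ℝ ι) (r : ℝ) :
    ∃ q : MvPolynomial ι ℝ, q.totalDegree ≤ p.totalDegree ∧
      ∀ w : EuclideanSpace ℝ ι, eval (fun i => w i) q = eval (fun i => (x + r • w) i) p := by
  refine ⟨bind₁ (fun i => C r * X i + C (x i)) p, ?_, fun w => ?_⟩
  · refine (totalDegree_bind₁_le_s3 _ p fun i => (totalDegree_add _ _).trans ?_).trans (mul_one _).le
    simpa [C_mul'] using totalDegree_smul_le r (X i : MvPolynomial ι ℝ)
  · have hcoord : (fun i => aeval (fun i => w i) (C r * X i + C (x i))) = fun i => (x + r • w) i :=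
      _root_.funext fun i => by simp [add_comm]
    exact (aeval_bind₁ _ _ p).trans (congrArg (aeval · p) hcoord)

theorem hausdorffMeasure_closedBall_inter_hyperplane_le {E : Type*} [NormedAddCommGroup E]
    [InnerProductSpace ℝ E] [MeasurableSpace E] [BorelSpace E] {m : ℕ}
    (hE : finrank ℝ E = m + 1) {n : E} (hn : n ≠ 0) (x : E) {r : ℝ} (hr : 0 ≤ r) (c : ℝ) :
    μH[m] {z | z ∈ closedBall x r ∧ ⟪z, n⟫ = c} ≤
      ENNReal.ofReal ((2 * r) ^ m) * μH[m] (ball (0 : EuclideanSpace ℝ (Fin m)) 1) := by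
  rcases Set.eq_empty_or_nonempty {z | z ∈ closedBall x r ∧ ⟪z, n⟫ = c} with hF | ⟨z₀, hz₀, hz₀c⟩
  · rw [hF, measure_empty]; exact zero_le
  have : Fact (finrank ℝ E = m + 1) := ⟨hE⟩
  let B := OrthonormalBasis.fromOrthogonalSpanSingleton (𝕜 := ℝ) m hn
  let ψ : EuclideanSpace ℝ (Fin m) → E := fun v => z₀ + (B.repr.symm v : E)
  have hψ : Isometry ψ :=
    (IsometryEquiv.addLeft z₀).isometry.comp (isometry_subtype_coe.comp B.repr.symm.isometry)
  have hF : {z | z ∈ closedBall x r ∧ ⟪z, n⟫ = c} ⊆ ψ '' closedBall 0 (2 * r) := by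
    rintro z ⟨hz, hzc⟩
    have hmem : z - z₀ ∈ (ℝ ∙ n)ᗮ := by
      rw [Submodule.mem_orthogonal_singleton_iff_inner_right, real_inner_comm, inner_sub_left,
        hzc, hz₀c, sub_self]
    refine ⟨B.repr ⟨z - z₀, hmem⟩, ?_, by simp [ψ]⟩
    rw [mem_closedBall_zero_iff, LinearIsometryEquiv.norm_map, Submodule.coe_norm, ← dist_eq_norm]
    linarith [dist_triangle_right z z₀ x, mem_closedBall.1 hz, mem_closedBall.1 hz₀]
  calc μH[m] {z | z ∈ closedBall x r ∧ ⟪z, n⟫ = c}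
      ≤ μH[m] (ψ '' closedBall 0 (2 * r)) := measure_mono hF
    _ = μH[m] (closedBall (0 : EuclideanSpace ℝ (Fin m)) (2 * r)) :=
        hψ.hausdorffMeasure_image (Or.inl m.cast_nonneg) _
    _ = ENNReal.ofReal ((2 * r) ^ m) * μH[m] (ball (0 : EuclideanSpace ℝ (Fin m)) 1) := by
        rw [Measure.addHaar_closedBall _ _ (by positivity), finrank_euclideanSpace_fin]

section EuclideanSpace

variable {ι : Type*} [Fintype ι]

theorem MvPolynomial.memLp_eval_ball (p : MvPolynomial ι ℝ) (x : EuclideanSpace ℝ ι) (r : ℝ) :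
    MemLp (fun z : EuclideanSpace ℝ ι => eval (fun i => z i) p) 2 (volume.restrict (ball x r)) := by
  have hcont := p.continuous_eval_euclideanSpace
  refine (memLp_two_iff_integrable_sq hcont.aestronglyMeasurable).2 ?_
  exact ((hcont.pow 2).continuousOn.integrableOn_compact (isCompact_closedBall x r)).mono_set
    ball_subset_closedBall

variable (ι) in
noncomputable def evalL2UnitBall :
    MvPolynomial ι ℝ →ₗ[ℝ] Lp ℝ 2 (volume.restrict (ball (0 : EuclideanSpace ℝ ι) 1)) where
  toFun p := (p.memLp_eval_ball 0 1).toLp _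
  map_add' p q := by simp_rw [map_add]; exact MemLp.toLp_add _ _
  map_smul' c p := by simp_rw [smul_eval]; exact MemLp.toLp_const_smul c _

theorem norm_evalL2UnitBall_sq (p : MvPolynomial ι ℝ) :
    ‖evalL2UnitBall ι p‖ ^ 2 =
      ∫ z in ball (0 : EuclideanSpace ℝ ι) 1, (eval (fun i => z i) p) ^ 2 := by
  rw [← real_inner_self_eq_norm_sq, L2.inner_def]
  refine integral_congr_ae ?_
  filter_upwards [(p.memLp_eval_ball 0 1).coeFn_toLp] with z hz
  simp [evalL2UnitBall, hz, sq]

theorem evalL2UnitBall_injective : Function.Injective (evalL2UnitBall ι) := by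
  rw [← LinearMap.ker_eq_bot, LinearMap.ker_eq_bot']
  intro p hp
  have hae : (fun z : EuclideanSpace ℝ ι => eval (fun i => z i) p)
      =ᵐ[volume.restrict (ball 0 1)] 0 := by
    filter_upwards [(p.memLp_eval_ball 0 1).coeFn_toLp, Lp.coeFn_zero ℝ 2 _] with z hz h0
    change (p.memLp_eval_ball 0 1).toLp _ = 0 at hp
    rw [← hz, hp, h0, Pi.zero_apply]
  have hball := Measure.eqOn_open_of_ae_eq hae isOpen_ball
    p.continuous_eval_euclideanSpace.continuousOn continuousOn_const
  exact eq_zero_of_eval_eq_zero_on_isOpen_s3 (U := WithLp.toLp 2 ⁻¹' ball 0 1)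
    (isOpen_ball.preimage (PiLp.continuous_toLp 2 _)) ⟨0, by simp⟩ fun x hx => hball hx

variable (ι) in
noncomputable def evalUnitClosedBall :
    MvPolynomial ι ℝ →ₗ[ℝ] C(closedBall (0 : EuclideanSpace ℝ ι) 1, ℝ) where
  toFun p := ⟨fun z => eval (fun i => (z : EuclideanSpace ℝ ι) i) p,
    p.continuous_eval_euclideanSpace.comp continuous_subtype_val⟩
  map_add' p q := by ext; simp
  map_smul' c p := by ext; simp

theorem exists_sq_eval_le_mul_integral_unitBall (ℓ : ℕ) :
    ∃ K, 0 < K ∧ ∀ p : MvPolynomial ι ℝ, p.totalDegree ≤ ℓ →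
      ∀ z ∈ closedBall (0 : EuclideanSpace ℝ ι) 1, (eval (fun i => z i) p) ^ 2 ≤
        K * ∫ w in ball (0 : EuclideanSpace ℝ ι) 1, (eval (fun i => w i) p) ^ 2 := by
  let V := restrictTotalDegree ι ℝ ℓ
  obtain ⟨C, hC, hle⟩ := LinearMap.exists_norm_le_mul_norm_of_injective
    ((evalL2UnitBall ι).domRestrict V) (evalL2UnitBall_injective.comp Subtype.val_injective)
    ((evalUnitClosedBall ι).domRestrict V)
  refine ⟨C ^ 2, by positivity, fun p hp z hz => ?_⟩
  calc (eval (fun i => z i) p) ^ 2 = ‖evalUnitClosedBall ι p ⟨z, hz⟩‖ ^ 2 := by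
        simp [evalUnitClosedBall]
    _ ≤ ‖evalUnitClosedBall ι p‖ ^ 2 := by gcongr; exact ContinuousMap.norm_coe_le_norm _ _
    _ ≤ (C * ‖evalL2UnitBall ι p‖) ^ 2 := by
        gcongr; exact hle ⟨p, (mem_restrictTotalDegree _ _ _).2 hp⟩
    _ = C ^ 2 * ∫ w in ball (0 : EuclideanSpace ℝ ι) 1, (eval (fun i => w i) p) ^ 2 := by
        rw [mul_pow, norm_evalL2UnitBall_sq]

theorem exists_sq_eval_le_mul_integral_ball (ℓ : ℕ) :
    ∃ K, 0 < K ∧ ∀ p : MvPolynomial ι ℝ, p.totalDegree ≤ ℓ →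
      ∀ (x : EuclideanSpace ℝ ι) (r : ℝ), 0 < r → ∀ z ∈ closedBall x r,
        (eval (fun i => z i) p) ^ 2 ≤
          K * (r ^ Fintype.card ι)⁻¹ * ∫ w in ball x r, (eval (fun i => w i) p) ^ 2 := by
  obtain ⟨K, hK, hunit⟩ := exists_sq_eval_le_mul_integral_unitBall (ι := ι) ℓ
  refine ⟨K, hK, fun p hp x r hr z hz => ?_⟩
  obtain ⟨q, hq_deg, hq⟩ := p.exists_totalDegree_le_eval_eq_eval_add_smul x r
  have hw : r⁻¹ • (z - x) ∈ closedBall (0 : EuclideanSpace ℝ ι) 1 := by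
    rw [mem_closedBall_zero_iff, norm_smul, norm_inv, Real.norm_of_nonneg hr.le,
      inv_mul_le_one₀ hr, ← dist_eq_norm]
    exact hz
  have hzw : x + r • r⁻¹ • (z - x) = z := by
    rw [smul_inv_smul₀ hr.ne', add_sub_cancel]
  calc (eval (fun i => z i) p) ^ 2 = (eval (fun i => (r⁻¹ • (z - x)) i) q) ^ 2 := by
        rw [hq, hzw]
    _ ≤ K * ∫ w in ball (0 : EuclideanSpace ℝ ι) 1, (eval (fun i => w i) q) ^ 2 :=
        hunit q (hq_deg.trans hp) _ hw
    _ = K * (r ^ Fintype.card ι)⁻¹ * ∫ w in ball x r, (eval (fun i => w i) p) ^ 2 := by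
        simp_rw [hq]
        rw [volume.setIntegral_ball_comp_add_smul (fun y => (eval (fun i => y i) p) ^ 2) x hr,
          finrank_euclideanSpace, smul_eq_mul, mul_assoc]

end EuclideanSpace

/-- Discrete trace inequality for polynomials on flat faces cutting through a ball. -/
theorem polynomial_trace_inequality_flat_face
    (d ℓ : ℕ) (hd : 1 ≤ d) :
    ∃ C : ℝ, 0 < C ∧
      ∀ (p : MvPolynomial (Fin d) ℝ), p.totalDegree ≤ ℓ →
        ∀ (x : EuclideanSpace ℝ (Fin d)) (r : ℝ), 0 < r →
          ∀ (n : EuclideanSpace ℝ (Fin d)), ‖n‖ = 1 → ∀ (c : ℝ),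
            (∫ z in {z : EuclideanSpace ℝ (Fin d) |
                z ∈ closedBall x r ∧ (inner ℝ z n : ℝ) = c},
                (MvPolynomial.eval (fun i => z i) p) ^ 2
                ∂(MeasureTheory.Measure.hausdorffMeasure ((d : ℝ) - 1))) ≤
              C * r⁻¹ * ∫ z in ball x r, (MvPolynomial.eval (fun i => z i) p) ^ 2 := by
  obtain ⟨m, rfl⟩ : ∃ m, d = m + 1 := ⟨d - 1, by omega⟩
  obtain ⟨K, hK, hsup⟩ := exists_sq_eval_le_mul_integral_ball (ι := Fin (m + 1)) ℓ
  set A := (μH[m] (ball (0 : EuclideanSpace ℝ (Fin m)) 1)).toReal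
  have hA : 0 < A := ENNReal.toReal_pos (measure_ball_pos _ _ one_pos).ne' measure_ball_lt_top.ne
  refine ⟨K * 2 ^ m * A, by positivity, fun p hp x r hr n hn c => ?_⟩
  rw [show ((m + 1 : ℕ) : ℝ) - 1 = m by push_cast; ring]
  set F := {z : EuclideanSpace ℝ (Fin (m + 1)) | z ∈ closedBall x r ∧ ⟪z, n⟫ = c}
  set J := ∫ z in ball x r, (eval (fun i => z i) p) ^ 2
  have hF : μH[m] F ≤ ENNReal.ofReal ((2 * r) ^ m * A) := by
    rw [ENNReal.ofReal_mul (by positivity), ENNReal.ofReal_toReal measure_ball_lt_top.ne]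
    exact hausdorffMeasure_closedBall_inter_hyperplane_le finrank_euclideanSpace_fin
      (norm_ne_zero_iff.1 (hn ▸ one_ne_zero)) x hr.le c
  calc ∫ z in F, (eval (fun i => z i) p) ^ 2 ∂μH[m]
      ≤ K * (r ^ (m + 1))⁻¹ * J * (μH[m]).real F := by
        refine (Real.le_norm_self _).trans (norm_setIntegral_le_of_norm_le_const
          (hF.trans_lt ENNReal.ofReal_lt_top) fun z hz => ?_)
        rw [Real.norm_of_nonneg (sq_nonneg _)]
        simpa using hsup p hp x r hr z hz.1
    _ ≤ K * (r ^ (m + 1))⁻¹ * J * ((2 * r) ^ m * A) := by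
        gcongr
        exact ENNReal.toReal_le_of_le_ofReal (by positivity) hF
    _ = K * 2 ^ m * A * r⁻¹ * J := by field_simp; ring
end

section
/- For every dimension d ≥ 1 and every θ ∈ (0,1], there exists a constant C > 0, depending only on d and θ, such that for all x, y ∈ ℝ^d, all radii R > 0, ρ > 0 with θR ≤ ρ and closedBall(y,ρ) ⊆ closedBall(x,R), and every v : ℝ^d → ℝ continuously differentiable on an open set containing closedBall(x,R), one has ∫_{B(x,R)} (v(z) − ⟨v⟩_{B(y,ρ)})² dz ≤ C R² ∫_{B(x,R)} ‖∇v(z)‖² dz, where ⟨v⟩_{B(y,ρ)} is the mean value of v over B(y,ρ). (Poincaré-type inequality with the mean computed over a sub-ball: step (1) of the approximation lemma for the unfitted HHO interpolation operator, comparing a function on a neighborhood Δ(T) with its mean over the ball contained in the well-cut sub-cell.) -/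
/-!
For `z ∈ B(x, R)` and `w` in the sub-ball, the fundamental theorem of calculus along the segment
`[w, z]` and Jensen's inequality give `(v z - v w)² ≤ 4R² ∫₀¹ ‖∇v (w + t (z - w))‖² dt`, and Jensen
again bounds `(v z - ⟨v⟩)²` by the mean over `w` of `(v z - v w)²`. Integrating in `z` and `w`,
the substitution `u = w + t (z - w)`, made in `w` when `t ≤ 1/2` and in `z` when `t > 1/2`, has
Jacobian at most `2^d`; the points with `t > 0` stay in the open ball `B(x, R)`. This bounds the
left-hand side by `2^(d+2) R² (max |B(x, R)| |B(y, ρ)| / |B(y, ρ)|) ∫_{B(x,R)} ‖∇v‖²`, and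
that volume ratio is `max (R / ρ)^d 1 ≤ θ^(-d)`.
-/

open MeasureTheory Metric Set Module

section Averages

variable {α : Type*} [MeasurableSpace α] {μ : Measure α}

theorem sq_average_le_average_sq [IsFiniteMeasure μ] [NeZero μ] {f : α → ℝ}
    (hf : Integrable f μ) (hf2 : Integrable (fun a ↦ f a ^ 2) μ) :
    (⨍ a, f a ∂μ) ^ 2 ≤ ⨍ a, f a ^ 2 ∂μ :=
  (Even.convexOn_pow even_two).map_average_le (continuous_pow 2).continuousOn isClosed_univ
    (ae_of_all _ fun _ ↦ trivial) hf hf2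

theorem sq_sub_setAverage_le {s : Set α} (hs : μ s ≠ ⊤) (hs0 : μ s ≠ 0) {f : α → ℝ}
    (hf : IntegrableOn f s μ) (c : ℝ) (hf2 : IntegrableOn (fun a ↦ (c - f a) ^ 2) s μ) :
    (c - ⨍ a in s, f a ∂μ) ^ 2 ≤ (μ.real s)⁻¹ * ∫ a in s, (c - f a) ^ 2 ∂μ := by
  have : IsFiniteMeasure (μ.restrict s) := isFiniteMeasure_restrict.2 hs
  have : NeZero (μ.restrict s) := ⟨by simpa [Measure.restrict_eq_zero] using hs0⟩
  have hmean : ⨍ a in s, (c - f a) ∂μ = c - ⨍ a in s, f a ∂μ := by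
    simp only [setAverage_eq, integral_sub (integrable_const c) hf, setIntegral_const,
      smul_eq_mul]
    field_simp [measureReal_def, ENNReal.toReal_eq_zero_iff, hs, hs0]
  rw [← hmean, ← smul_eq_mul, ← setAverage_eq]
  exact sq_average_le_average_sq ((integrable_const c).sub hf) hf2

theorem integral_integral_swap_of_bounded {β : Type*} [MeasurableSpace β] {ν : Measure β}
    [IsFiniteMeasure μ] [IsFiniteMeasure ν] {f : α → β → ℝ} (hf : Measurable (Function.uncurry f))
    {C : ℝ} (hC : ∀ a b, ‖f a b‖ ≤ C) :
    ∫ a, ∫ b, f a b ∂ν ∂μ = ∫ b, ∫ a, f a b ∂μ ∂ν :=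
  integral_integral_swap <|
    .of_bound hf.aestronglyMeasurable C (ae_of_all _ fun p ↦ hC p.1 p.2)

theorem setIntegral_le_measureReal_mul {f : α → ℝ} {s : Set α} (hs : μ s ≠ ⊤) {C : ℝ}
    (hf0 : ∀ a ∈ s, 0 ≤ f a) (hfC : ∀ a ∈ s, f a ≤ C) :
    ∫ a in s, f a ∂μ ≤ μ.real s * C := by
  have h := norm_setIntegral_le_of_norm_le_const (μ := μ) hs.lt_top (C := C) fun a ha ↦ by
    rw [Real.norm_of_nonneg (hf0 a ha)]; exact hfC a ha
  rw [mul_comm]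
  exact (le_abs_self _).trans h

end Averages

section Segment

variable {E : Type*} [NormedAddCommGroup E] [NormedSpace ℝ E]

theorem sub_eq_integral_fderiv_segment {v : E → ℝ} {U : Set E} (hU : IsOpen U)
    (hv : ContDiffOn ℝ 1 v U) {w z : E} (hwz : segment ℝ w z ⊆ U) :
    v z - v w = ∫ t in Ioc (0 : ℝ) 1, fderiv ℝ v (w + t • (z - w)) (z - w) := by
  have hγU : ∀ t ∈ Icc (0 : ℝ) 1, w + t • (z - w) ∈ U := fun t ht ↦
    hwz (segment_eq_image' ℝ w z ▸ mem_image_of_mem _ ht)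
  have hderiv : ∀ t ∈ uIcc (0 : ℝ) 1, HasDerivAt (fun s : ℝ ↦ v (w + s • (z - w)))
      (fderiv ℝ v (w + t • (z - w)) (z - w)) t := by
    intro t ht
    rw [uIcc_of_le zero_le_one] at ht
    have hvt : DifferentiableAt ℝ v (w + t • (z - w)) :=
      (hv.differentiableOn one_ne_zero).differentiableAt (hU.mem_nhds (hγU t ht))
    simpa [Function.comp_def] using hvt.hasFDerivAt.comp_hasDerivAt t
      (((hasDerivAt_id t).smul_const (z - w)).const_add w)
  have hcont : ContinuousOn (fun t : ℝ ↦ fderiv ℝ v (w + t • (z - w)) (z - w)) (uIcc 0 1) := by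
    rw [uIcc_of_le zero_le_one]
    exact (hv.continuousOn_fderiv_of_isOpen hU le_rfl).clm_apply continuousOn_const
      |>.comp (by fun_prop) hγU
  rw [← intervalIntegral.integral_of_le zero_le_one,
    intervalIntegral.integral_eq_sub_of_hasDerivAt hderiv hcont.intervalIntegrable]
  simp

theorem sq_sub_le_sq_norm_mul_integral_sq_norm_fderiv {v : E → ℝ} {U : Set E} (hU : IsOpen U)
    (hv : ContDiffOn ℝ 1 v U) {w z : E} (hwz : segment ℝ w z ⊆ U) :
    (v z - v w) ^ 2 ≤
      ‖z - w‖ ^ 2 * ∫ t in Ioc (0 : ℝ) 1, ‖fderiv ℝ v (w + t • (z - w))‖ ^ 2 := by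
  have hγU : ∀ t ∈ Icc (0 : ℝ) 1, w + t • (z - w) ∈ U := fun t ht ↦
    hwz (segment_eq_image' ℝ w z ▸ mem_image_of_mem _ ht)
  have hDv : ContinuousOn (fun t : ℝ ↦ fderiv ℝ v (w + t • (z - w))) (Icc 0 1) :=
    (hv.continuousOn_fderiv_of_isOpen hU le_rfl).comp (by fun_prop) hγU
  have hψ : IntegrableOn (fun t ↦ fderiv ℝ v (w + t • (z - w)) (z - w)) (Ioc (0 : ℝ) 1) :=
    ((hDv.clm_apply continuousOn_const).integrableOn_compact isCompact_Icc).mono_set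
      Ioc_subset_Icc_self
  have hψ2 : IntegrableOn (fun t ↦ fderiv ℝ v (w + t • (z - w)) (z - w) ^ 2) (Ioc (0 : ℝ) 1) :=
    (((hDv.clm_apply continuousOn_const).pow 2).integrableOn_compact isCompact_Icc).mono_set
      Ioc_subset_Icc_self
  have hDv2 : IntegrableOn (fun t ↦ ‖z - w‖ ^ 2 * ‖fderiv ℝ v (w + t • (z - w))‖ ^ 2)
      (Ioc (0 : ℝ) 1) :=
    (((hDv.norm.pow 2).const_smul (‖z - w‖ ^ 2)).integrableOn_compact isCompact_Icc).mono_set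
      Ioc_subset_Icc_self
  have : IsProbabilityMeasure (volume.restrict (Ioc (0 : ℝ) 1)) := ⟨by simp⟩
  rw [sub_eq_integral_fderiv_segment hU hv hwz, ← integral_const_mul]
  calc (∫ t in Ioc (0 : ℝ) 1, fderiv ℝ v (w + t • (z - w)) (z - w)) ^ 2
      ≤ ∫ t in Ioc (0 : ℝ) 1, fderiv ℝ v (w + t • (z - w)) (z - w) ^ 2 := by
        simpa only [average_eq_integral] using sq_average_le_average_sq hψ hψ2
    _ ≤ ∫ t in Ioc (0 : ℝ) 1, ‖z - w‖ ^ 2 * ‖fderiv ℝ v (w + t • (z - w))‖ ^ 2 := by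
        refine setIntegral_mono_on hψ2 hDv2 measurableSet_Ioc fun t _ ↦ ?_
        rw [← sq_abs, ← mul_pow, mul_comm]
        exact pow_le_pow_left₀ (abs_nonneg _) ((fderiv ℝ v _).le_opNorm _) 2

theorem add_smul_sub_mem_ball {x z w : E} {R t : ℝ} (hz : z ∈ ball x R)
    (hw : w ∈ closedBall x R) (ht : t ∈ Ioc (0 : ℝ) 1) : w + t • (z - w) ∈ ball x R := by
  have hR : R ≠ 0 := (pos_of_mem_ball hz).ne'
  simpa only [isOpen_ball.interior_eq] using (convex_ball x R).add_smul_sub_mem_interior'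
    (by rwa [closure_ball x hR]) (by rwa [isOpen_ball.interior_eq]) ht

end Segment

section SegmentAverage

variable {E : Type*} [NormedAddCommGroup E] [NormedSpace ℝ E] [FiniteDimensional ℝ E]
  [MeasurableSpace E] [BorelSpace E] {μ : Measure E} [μ.IsAddHaarMeasure] {g : E → ℝ}

theorem setIntegral_comp_add_smul_le (hg0 : ∀ u, 0 ≤ g u) (hgi : Integrable g μ) (A : Set E)
    (a : E) {s : ℝ} (hs : 1 / 2 ≤ s) :
    ∫ u in A, g (a + s • u) ∂μ ≤ 2 ^ finrank ℝ E * ∫ u, g u ∂μ := by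
  have hs0 : 0 < s := by linarith
  have hscale : |(s ^ finrank ℝ E)⁻¹| ≤ 2 ^ finrank ℝ E := by
    rw [← inv_pow, abs_pow, abs_of_pos (inv_pos.2 hs0)]
    exact pow_le_pow_left₀ (inv_pos.2 hs0).le (by rw [inv_le_comm₀ hs0 two_pos]; linarith) _
  calc ∫ u in A, g (a + s • u) ∂μ
      ≤ ∫ u, g (a + s • u) ∂μ :=
        setIntegral_le_integral ((hgi.comp_add_left a).comp_smul hs0.ne')
          (ae_of_all _ fun _ ↦ hg0 _)
    _ = |(s ^ finrank ℝ E)⁻¹| * ∫ u, g u ∂μ := by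
        rw [Measure.integral_comp_smul μ (fun u ↦ g (a + u)), integral_add_left_eq_self,
          smul_eq_mul]
    _ ≤ 2 ^ finrank ℝ E * ∫ u, g u ∂μ :=
        mul_le_mul_of_nonneg_right hscale (integral_nonneg hg0)

variable {M : ℝ}

theorem setIntegral_setIntegral_comp_segment_le (hg : Measurable g) (hg0 : ∀ u, 0 ≤ g u)
    (hgM : ∀ u, g u ≤ M) (hgi : Integrable g μ) {A B : Set E} (hA : μ A ≠ ⊤) (hB : μ B ≠ ⊤)
    (t : ℝ) :
    ∫ z in A, ∫ w in B, g (w + t • (z - w)) ∂μ ∂μ ≤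
      max (μ.real A) (μ.real B) * (2 ^ finrank ℝ E * ∫ u, g u ∂μ) := by
  have hJ : 0 ≤ 2 ^ finrank ℝ E * ∫ u, g u ∂μ := mul_nonneg (by positivity) (integral_nonneg hg0)
  have hcombo : ∀ z w : E, w + t • (z - w) = (1 - t) • w + t • z := fun z w ↦ by module
  rcases le_or_gt t (1 / 2) with ht2 | ht2
  · calc ∫ z in A, ∫ w in B, g (w + t • (z - w)) ∂μ ∂μ
        ≤ μ.real A * (2 ^ finrank ℝ E * ∫ u, g u ∂μ) :=
          setIntegral_le_measureReal_mul hA (fun z _ ↦ integral_nonneg fun _ ↦ hg0 _)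
            fun z _ ↦ by simpa only [hcombo, add_comm] using
              setIntegral_comp_add_smul_le hg0 hgi B (t • z) (by linarith)
      _ ≤ _ := mul_le_mul_of_nonneg_right (le_max_left _ _) hJ
  · have : IsFiniteMeasure (μ.restrict A) := isFiniteMeasure_restrict.2 hA
    have : IsFiniteMeasure (μ.restrict B) := isFiniteMeasure_restrict.2 hB
    rw [integral_integral_swap_of_bounded (C := M) (by fun_prop) fun z w ↦ by
      rw [Real.norm_of_nonneg (hg0 _)]; exact hgM _]
    calc ∫ w in B, ∫ z in A, g (w + t • (z - w)) ∂μ ∂μ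
        ≤ μ.real B * (2 ^ finrank ℝ E * ∫ u, g u ∂μ) :=
          setIntegral_le_measureReal_mul hB (fun w _ ↦ integral_nonneg fun _ ↦ hg0 _)
            fun w _ ↦ by simpa only [hcombo] using
              setIntegral_comp_add_smul_le hg0 hgi A ((1 - t) • w) ht2.le
      _ ≤ _ := mul_le_mul_of_nonneg_right (le_max_right _ _) hJ

theorem setIntegral_setIntegral_integral_segment_le (hg : Measurable g) (hg0 : ∀ u, 0 ≤ g u)
    (hgM : ∀ u, g u ≤ M) (hgi : Integrable g μ) {A B : Set E} (hA : μ A ≠ ⊤) (hB : μ B ≠ ⊤) :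
    ∫ z in A, ∫ w in B, (∫ t in Ioc (0 : ℝ) 1, g (w + t • (z - w))) ∂μ ∂μ ≤
      max (μ.real A) (μ.real B) * (2 ^ finrank ℝ E * ∫ u, g u ∂μ) := by
  have : IsFiniteMeasure (μ.restrict A) := isFiniteMeasure_restrict.2 hA
  have : IsFiniteMeasure (μ.restrict B) := isFiniteMeasure_restrict.2 hB
  have hI : volume.real (Ioc (0 : ℝ) 1) = 1 := by simp
  have hgM' : ∀ u, ‖g u‖ ≤ M := fun u ↦ by rw [Real.norm_of_nonneg (hg0 u)]; exact hgM u
  have hswap_wt : ∀ z : E, ∫ w in B, (∫ t in Ioc (0 : ℝ) 1, g (w + t • (z - w))) ∂μ =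
      ∫ t in Ioc (0 : ℝ) 1, ∫ w in B, g (w + t • (z - w)) ∂μ := fun z ↦
    integral_integral_swap_of_bounded (by fun_prop) fun _ _ ↦ hgM' _
  have hF : Measurable fun p : E × ℝ ↦ ∫ w in B, g (w + p.2 • (p.1 - w)) ∂μ :=
    (StronglyMeasurable.integral_prod_right' (f := fun q : (E × ℝ) × E ↦
      g (q.2 + q.1.2 • (q.1.1 - q.2))) (hg.comp (by fun_prop)).stronglyMeasurable).measurable
  have hFM : ∀ (z : E) (t : ℝ), ‖∫ w in B, g (w + t • (z - w)) ∂μ‖ ≤ M * μ.real B := fun z t ↦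
    norm_setIntegral_le_of_norm_le_const hB.lt_top fun w _ ↦ hgM' (w + t • (z - w))
  simp_rw [hswap_wt]
  rw [integral_integral_swap_of_bounded hF hFM]
  simpa [hI] using setIntegral_le_measureReal_mul (μ := volume) (s := Ioc (0 : ℝ) 1) (by simp)
    (fun t _ ↦ integral_nonneg fun _ ↦ integral_nonneg fun _ ↦ hg0 _)
    fun t _ ↦ setIntegral_setIntegral_comp_segment_le hg hg0 hgM hgi hA hB t

theorem setIntegral_sq_sub_setAverage_le_of_sq_sub_le_segment (hg : Measurable g)
    (hg0 : ∀ u, 0 ≤ g u) (hgM : ∀ u, g u ≤ M) (hgi : Integrable g μ) {A B : Set E}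
    (hA : MeasurableSet A) (hAμ : μ A ≠ ⊤) (hB : MeasurableSet B) (hBμ : μ B ≠ ⊤) (hB0 : μ B ≠ 0)
    {v : E → ℝ} (hv : IntegrableOn v B μ)
    (hv2 : ∀ z ∈ A, IntegrableOn (fun w ↦ (v z - v w) ^ 2) B μ) {c : ℝ} (hc : 0 ≤ c)
    (hsegment : ∀ z ∈ A, ∀ w ∈ B,
      (v z - v w) ^ 2 ≤ c * ∫ t in Ioc (0 : ℝ) 1, g (w + t • (z - w))) :
    ∫ z in A, (v z - ⨍ w in B, v w ∂μ) ^ 2 ∂μ ≤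
      c * (max (μ.real A) (μ.real B) / μ.real B) * (2 ^ finrank ℝ E * ∫ u, g u ∂μ) := by
  have : IsFiniteMeasure (μ.restrict A) := isFiniteMeasure_restrict.2 hAμ
  have : IsFiniteMeasure (μ.restrict B) := isFiniteMeasure_restrict.2 hBμ
  set Φ : E → E → ℝ := fun z w ↦ ∫ t in Ioc (0 : ℝ) 1, g (w + t • (z - w))
  have hΦ : Measurable (Function.uncurry Φ) :=
    (StronglyMeasurable.integral_prod_right' (f := fun q : (E × E) × ℝ ↦
      g (q.1.2 + q.2 • (q.1.1 - q.1.2))) (hg.comp (by fun_prop)).stronglyMeasurable).measurable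
  have hΦM : ∀ z w, ‖Φ z w‖ ≤ M := fun z w ↦ by
    simpa using norm_setIntegral_le_of_norm_le_const (μ := volume) (s := Ioc (0 : ℝ) 1)
      measure_Ioc_lt_top fun t _ ↦ (Real.norm_of_nonneg (hg0 (w + t • (z - w)))).trans_le (hgM _)
  have hΦB : IntegrableOn (fun z ↦ ∫ w in B, Φ z w ∂μ) A μ :=
    Integrable.of_bound hΦ.stronglyMeasurable.integral_prod_right'.aestronglyMeasurable
      (M * μ.real B) (ae_of_all _ fun z ↦
        norm_setIntegral_le_of_norm_le_const hBμ.lt_top fun w _ ↦ hΦM z w)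
  have hpointwise : ∀ z ∈ A,
      (v z - ⨍ w in B, v w ∂μ) ^ 2 ≤ (μ.real B)⁻¹ * (c * ∫ w in B, Φ z w ∂μ) := fun z hz ↦ by
    refine (sq_sub_setAverage_le hBμ hB0 hv (v z) (hv2 z hz)).trans ?_
    refine mul_le_mul_of_nonneg_left ?_ (by positivity)
    rw [← integral_const_mul]
    refine integral_mono_of_nonneg (ae_of_all _ fun _ ↦ sq_nonneg _) ?_
      (ae_restrict_of_forall_mem hB fun w hw ↦ hsegment z hz w hw)
    exact (Integrable.of_bound (hΦ.comp measurable_prodMk_left).aestronglyMeasurable M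
      (ae_of_all _ (hΦM z))).const_mul c
  calc ∫ z in A, (v z - ⨍ w in B, v w ∂μ) ^ 2 ∂μ
      ≤ ∫ z in A, (μ.real B)⁻¹ * (c * ∫ w in B, Φ z w ∂μ) ∂μ :=
        integral_mono_of_nonneg (ae_of_all _ fun _ ↦ sq_nonneg _)
          ((hΦB.const_mul c).const_mul _) (ae_restrict_of_forall_mem hA hpointwise)
    _ = (μ.real B)⁻¹ * c * ∫ z in A, ∫ w in B, Φ z w ∂μ ∂μ := by
        rw [integral_const_mul, integral_const_mul, mul_assoc]
    _ ≤ (μ.real B)⁻¹ * c * (max (μ.real A) (μ.real B) * (2 ^ finrank ℝ E * ∫ u, g u ∂μ)) :=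
        mul_le_mul_of_nonneg_left
          (setIntegral_setIntegral_integral_segment_le hg hg0 hgM hgi hAμ hBμ) (by positivity)
    _ = _ := by ring

end SegmentAverage

section Ball

variable {E : Type*} [NormedAddCommGroup E] [NormedSpace ℝ E] [FiniteDimensional ℝ E]
  [MeasurableSpace E] [BorelSpace E] (μ : Measure E) [μ.IsAddHaarMeasure]

theorem setIntegral_sq_sub_setAverage_le_of_subset_closedBall {x : E} {R : ℝ} {B : Set E}
    (hB : MeasurableSet B) (hBR : B ⊆ closedBall x R) (hB0 : μ B ≠ 0) {v : E → ℝ} {U : Set E}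
    (hU : IsOpen U) (hRU : closedBall x R ⊆ U) (hv : ContDiffOn ℝ 1 v U) :
    ∫ z in ball x R, (v z - ⨍ w in B, v w ∂μ) ^ 2 ∂μ ≤
      4 * R ^ 2 * (max (μ.real (ball x R)) (μ.real B) / μ.real B) *
        (2 ^ finrank ℝ E * ∫ z in ball x R, ‖fderiv ℝ v z‖ ^ 2 ∂μ) := by
  set g := (ball x R).indicator fun u ↦ ‖fderiv ℝ v u‖ ^ 2
  have hDv : ContinuousOn (fun u ↦ ‖fderiv ℝ v u‖ ^ 2) (closedBall x R) :=
    ((hv.continuousOn_fderiv_of_isOpen hU le_rfl).mono hRU).norm.pow 2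
  obtain ⟨M, hM⟩ := (isCompact_closedBall x R).exists_bound_of_continuousOn hDv
  have hg : Measurable g := ((measurable_fderiv ℝ v).norm.pow_const 2).indicator measurableSet_ball
  have hg0 : ∀ u, 0 ≤ g u := fun u ↦ indicator_nonneg (fun _ _ ↦ by positivity) u
  have hgM : ∀ u, g u ≤ max M 0 := fun u ↦ indicator_apply_le'
    (fun hu ↦ ((le_abs_self _).trans (hM u (ball_subset_closedBall hu))).trans (le_max_left _ _))
    (fun _ ↦ le_max_right _ _)
  have hgi : Integrable g μ := (integrable_indicator_iff measurableSet_ball).2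
    ((hDv.integrableOn_compact (isCompact_closedBall x R)).mono_set ball_subset_closedBall)
  have hvR : ContinuousOn v (closedBall x R) := hv.continuousOn.mono hRU
  rw [← integral_indicator measurableSet_ball (f := fun z ↦ ‖fderiv ℝ v z‖ ^ 2)]
  refine setIntegral_sq_sub_setAverage_le_of_sq_sub_le_segment hg hg0 hgM hgi measurableSet_ball
    measure_ball_lt_top.ne hB ((measure_mono hBR).trans_lt measure_closedBall_lt_top).ne hB0
    ((hvR.integrableOn_compact (isCompact_closedBall x R)).mono_set hBR)
    (fun z _ ↦ (((continuousOn_const.sub hvR).pow 2).integrableOn_compact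
      (isCompact_closedBall x R)).mono_set hBR) (c := 4 * R ^ 2) (by positivity) fun z hz w hw ↦ ?_
  have hseg : segment ℝ w z ⊆ U := ((convex_closedBall x R).segment_subset (hBR hw)
    (ball_subset_closedBall hz)).trans hRU
  have hzw : ‖z - w‖ ≤ 2 * R := by
    rw [← dist_eq_norm, two_mul]
    exact (dist_triangle_right z w x).trans
      (add_le_add (mem_ball.1 hz).le (mem_closedBall.1 (hBR hw)))
  calc (v z - v w) ^ 2
      ≤ ‖z - w‖ ^ 2 * ∫ t in Ioc (0 : ℝ) 1, ‖fderiv ℝ v (w + t • (z - w))‖ ^ 2 :=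
        sq_sub_le_sq_norm_mul_integral_sq_norm_fderiv hU hv hseg
    _ ≤ (2 * R) ^ 2 * ∫ t in Ioc (0 : ℝ) 1, ‖fderiv ℝ v (w + t • (z - w))‖ ^ 2 :=
        mul_le_mul_of_nonneg_right (pow_le_pow_left₀ (norm_nonneg _) hzw 2)
          (integral_nonneg fun _ ↦ by positivity)
    _ = 4 * R ^ 2 * ∫ t in Ioc (0 : ℝ) 1, g (w + t • (z - w)) := by
        rw [setIntegral_congr_fun measurableSet_Ioc fun t ht ↦
          (indicator_of_mem (add_smul_sub_mem_ball hz (hBR hw) ht)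
            (fun u ↦ ‖fderiv ℝ v u‖ ^ 2)).symm]
        ring

theorem max_measureReal_ball_div_le {θ R ρ : ℝ} (hθ : θ ∈ Ioc (0 : ℝ) 1) (hR : 0 < R)
    (hρ : 0 < ρ) (hθR : θ * R ≤ ρ) (x y : E) :
    max (μ.real (ball x R)) (μ.real (ball y ρ)) / μ.real (ball y ρ) ≤ (θ ^ finrank ℝ E)⁻¹ := by
  have hball : ∀ (z : E) {r : ℝ}, 0 < r → μ.real (ball z r) = r ^ finrank ℝ E * μ.real (ball 0 1) :=
    fun z r hr ↦ by
      rw [measureReal_def, Measure.addHaar_ball_of_pos μ z hr, ENNReal.toReal_mul,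
        ENNReal.toReal_ofReal (by positivity), measureReal_def]
  have hc : 0 < μ.real (ball (0 : E) 1) :=
    ENNReal.toReal_pos (measure_ball_pos μ 0 one_pos).ne' measure_ball_lt_top.ne
  have hθd : θ ^ finrank ℝ E * R ^ finrank ℝ E ≤ ρ ^ finrank ℝ E := by
    rw [← mul_pow]; exact pow_le_pow_left₀ (by nlinarith [hθ.1]) hθR _
  have hθd1 : θ ^ finrank ℝ E ≤ 1 := pow_le_one₀ hθ.1.le hθ.2
  have hθd0 : 0 < θ ^ finrank ℝ E := pow_pos hθ.1 _
  rw [hball x hR, hball y hρ, div_le_iff₀ (by positivity), ← div_eq_inv_mul,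
    le_div_iff₀ hθd0, max_mul_of_nonneg _ _ hθd0.le, max_le_iff]
  constructor <;> nlinarith [mul_pos (pow_pos hρ (finrank ℝ E)) hc]

end Ball

theorem poincare_subball_mean_general
    (d : ℕ) (θ : ℝ) (hθ : θ ∈ Set.Ioc (0 : ℝ) 1) :
    ∃ C : ℝ, 0 < C ∧
      ∀ (x y : EuclideanSpace ℝ (Fin d)) (R ρ : ℝ), 0 < R → 0 < ρ →
        θ * R ≤ ρ → closedBall y ρ ⊆ closedBall x R →
        ∀ (v : EuclideanSpace ℝ (Fin d) → ℝ) (U : Set (EuclideanSpace ℝ (Fin d))),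
          IsOpen U → closedBall x R ⊆ U → ContDiffOn ℝ 1 v U →
          (∫ z in ball x R, (v z - ⨍ w in ball y ρ, v w) ^ 2) ≤
            C * R ^ 2 * ∫ z in ball x R, ‖gradient v z‖ ^ 2 := by
  refine ⟨2 ^ (d + 2) / θ ^ d, div_pos (by positivity) (pow_pos hθ.1 d), ?_⟩
  intro x y R ρ hR hρ hθR hsub v U hU hRU hv
  have hgradient : ∀ z, ‖gradient v z‖ = ‖fderiv ℝ v z‖ := fun z ↦
    (InnerProductSpace.toDual ℝ _).symm.norm_map _
  have hratio := max_measureReal_ball_div_le volume hθ hR hρ hθR x y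
  have hpoincare := setIntegral_sq_sub_setAverage_le_of_subset_closedBall volume
    measurableSet_ball (ball_subset_closedBall.trans hsub) (measure_ball_pos volume y hρ).ne'
    hU hRU hv
  rw [finrank_euclideanSpace_fin] at hratio hpoincare
  simp_rw [hgradient]
  have hI : 0 ≤ ∫ z in ball x R, ‖fderiv ℝ v z‖ ^ 2 := integral_nonneg fun _ ↦ by positivity
  calc _ ≤ _ := hpoincare
    _ = 2 ^ (d + 2) * R ^ 2 * (∫ z in ball x R, ‖fderiv ℝ v z‖ ^ 2) *
          (max (volume.real (ball x R)) (volume.real (ball y ρ)) / volume.real (ball y ρ)) := by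
        ring
    _ ≤ 2 ^ (d + 2) * R ^ 2 * (∫ z in ball x R, ‖fderiv ℝ v z‖ ^ 2) * (θ ^ d)⁻¹ := by
        gcongr
    _ = _ := by ring

/-- Poincaré-type inequality with the mean computed over a sub-ball. -/
theorem poincare_subball_mean
    (d : ℕ) (hd : 1 ≤ d) (θ : ℝ) (hθ : θ ∈ Set.Ioc (0 : ℝ) 1) :
    ∃ C : ℝ, 0 < C ∧
      ∀ (x y : EuclideanSpace ℝ (Fin d)) (R ρ : ℝ), 0 < R → 0 < ρ →
        θ * R ≤ ρ → closedBall y ρ ⊆ closedBall x R →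
        ∀ (v : EuclideanSpace ℝ (Fin d) → ℝ) (U : Set (EuclideanSpace ℝ (Fin d))),
          IsOpen U → closedBall x R ⊆ U → ContDiffOn ℝ 1 v U →
          (∫ z in ball x R, (v z - ⨍ w in ball y ρ, v w) ^ 2) ≤
            C * R ^ 2 * ∫ z in ball x R, ‖gradient v z‖ ^ 2 :=
  poincare_subball_mean_general d θ hθ
end
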